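/- arXiv:1301.5112 — 7 statements merged into one kernel-verified Lean document; each statement's English description precedes it below -/
import Mathlib

section
/- Let T be a finite tree with vertex set V and let L⁺ ⊆ V be a 0-forked subset (L⁺ contains all fork nodes it generates). Then every connected component of T \ L⁺ is adjacent to at most two vertices of L⁺. -/
open SimpleGraph

/-- `i` is a fork node generated by `L`: `i ∉ L` and there are three distinct
nodes of `L` connected to `i` by pairwise edge-disjoint paths. -/
def IsFork {V : Type} (G : SimpleGraph V) (L : Set V) (i : V) : Prop :=
  i ∉ L ∧ ∃ i₁ i₂ i₃ : V, i₁ ∈ L ∧ i₂ ∈ L ∧ i₃ ∈ L ∧ i₁ ≠ i₂ ∧ i₂ ≠ i₃ ∧ i₁ ≠ i₃ ∧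
    ∃ (p₁ : G.Walk i i₁) (p₂ : G.Walk i i₂) (p₃ : G.Walk i i₃),
      p₁.IsPath ∧ p₂.IsPath ∧ p₃.IsPath ∧
      (∀ e ∈ p₁.edges, e ∉ p₂.edges) ∧ (∀ e ∈ p₂.edges, e ∉ p₃.edges) ∧
      (∀ e ∈ p₁.edges, e ∉ p₃.edges)

/-- `L` is 0-forked: it generates no fork nodes outside itself. -/
def ZeroForked {V : Type} (G : SimpleGraph V) (L : Set V) : Prop :=
  ∀ i : V, ¬ IsFork G L i

/-!
Take three vertices `v₁, v₂, v₃` of the component `C` adjacent to three distinct vertices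
`u₁, u₂, u₃` of `L⁺`. Inside `C`, join `v₁` to `v₂` by a path `p` and run a path from `v₃`
towards `p` until it first meets `p`, at `m`. The three branches from `m` to the `vᵢ` are
edge-disjoint paths in `C`; extending them by the edges `vᵢuᵢ` makes `m ∉ L⁺` a fork node.
-/

namespace SimpleGraph

variable {V : Type*} {G : SimpleGraph V}

namespace Walk

lemma disjoint_edges_of_forall_mem_support_eq {a b c d m : V} (p : G.Walk a b)
    (q : G.Walk c d) (h : ∀ x ∈ p.support, x ∈ q.support → x = m) :
    p.edges.Disjoint q.edges := by
  intro e hp hq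
  induction e using Sym2.ind with
  | _ x y =>
    have hx := h x (p.fst_mem_support_of_mem_edges hp) (q.fst_mem_support_of_mem_edges hq)
    have hy := h y (p.snd_mem_support_of_mem_edges hp) (q.snd_mem_support_of_mem_edges hq)
    exact (p.adj_of_mem_edges hp).ne (hx.trans hy.symm)

lemma disjoint_edges_concat {m v₁ v₂ u₁ u₂ : V} {p₁ : G.Walk m v₁} {p₂ : G.Walk m v₂}
    (h : p₁.edges.Disjoint p₂.edges) (h₁ : G.Adj v₁ u₁) (h₂ : G.Adj v₂ u₂) (hu : u₁ ≠ u₂)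
    (hu₁ : u₁ ∉ p₂.support) (hu₂ : u₂ ∉ p₁.support) :
    (p₁.concat h₁).edges.Disjoint (p₂.concat h₂).edges := by
  intro e he₁ he₂
  simp only [edges_concat, List.concat_eq_append, List.mem_append, List.mem_singleton]
    at he₁ he₂
  rcases he₁ with he₁ | rfl <;> rcases he₂ with he₂ | he₂
  · exact h he₁ he₂
  · exact hu₂ (p₁.snd_mem_support_of_mem_edges (he₂ ▸ he₁))
  · exact hu₁ (p₂.snd_mem_support_of_mem_edges he₂)
  · rcases Sym2.eq_iff.1 he₂ with ⟨-, h⟩ | ⟨-, h⟩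
    · exact hu h
    · exact hu₁ (h ▸ p₂.end_mem_support)

lemma notMem_support_map_induce {s : Set V} {a b : s} (p : (G.induce s).Walk a b) {u : V}
    (hu : u ∉ s) : u ∉ (p.map (Embedding.induce s).toHom).support := by
  rw [support_map, List.mem_map]
  rintro ⟨x, -, rfl⟩
  exact hu x.2

end Walk

lemma Reachable.exists_edge_disjoint_paths {v₁ v₂ v₃ : V} (h₁₂ : G.Reachable v₁ v₂)
    (h₃₁ : G.Reachable v₃ v₁) :
    ∃ (m : V) (p₁ : G.Walk m v₁) (p₂ : G.Walk m v₂) (p₃ : G.Walk m v₃),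
      p₁.IsPath ∧ p₂.IsPath ∧ p₃.IsPath ∧ p₁.edges.Disjoint p₂.edges ∧
      p₂.edges.Disjoint p₃.edges ∧ p₁.edges.Disjoint p₃.edges := by
  classical
  obtain ⟨p, hp⟩ := h₁₂.exists_isPath
  obtain ⟨q, hq⟩ := h₃₁.exists_isPath
  obtain ⟨m, hmp, hmq, hfirst⟩ := q.exists_mem_support_forall_mem_support_imp_eq
    p.support.toFinset ⟨v₁, by simp⟩
  rw [List.mem_toFinset] at hmp
  have hpq : p.edges.Disjoint (q.takeUntil m hmq).edges :=
    p.disjoint_edges_of_forall_mem_support_eq _ fun x hx => hfirst x (List.mem_toFinset.2 hx)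
  refine ⟨m, (p.takeUntil m hmp).reverse, p.dropUntil m hmp, (q.takeUntil m hmq).reverse,
    (hp.takeUntil hmp).reverse, hp.dropUntil hmp, (hq.takeUntil hmq).reverse, ?_, ?_, ?_⟩
  · rw [Walk.edges_reverse, List.disjoint_reverse_left]
    exact hp.isTrail.disjoint_edges_takeUntil_dropUntil hmp
  · rw [Walk.edges_reverse, List.disjoint_reverse_right]
    exact List.disjoint_of_subset_left (p.edges_dropUntil_subset_edges hmp) hpq
  · rw [Walk.edges_reverse, Walk.edges_reverse, List.disjoint_reverse_left,
      List.disjoint_reverse_right]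
    exact List.disjoint_of_subset_left (p.edges_takeUntil_subset_edges hmp) hpq

end SimpleGraph

lemma exists_isFork_of_adj_connectedComponent {V : Type} {G : SimpleGraph V} {L : Set V}
    (c : (G.induce Lᶜ).ConnectedComponent) {u₁ u₂ u₃ : V} {v₁ v₂ v₃ : ↥Lᶜ}
    (hu₁ : u₁ ∈ L) (hu₂ : u₂ ∈ L) (hu₃ : u₃ ∈ L)
    (hu₁₂ : u₁ ≠ u₂) (hu₁₃ : u₁ ≠ u₃) (hu₂₃ : u₂ ≠ u₃)
    (hv₁ : v₁ ∈ c.supp) (hv₂ : v₂ ∈ c.supp) (hv₃ : v₃ ∈ c.supp)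
    (h₁ : G.Adj u₁ v₁) (h₂ : G.Adj u₂ v₂) (h₃ : G.Adj u₃ v₃) :
    ∃ i, IsFork G L i := by
  rw [ConnectedComponent.mem_supp_iff] at hv₁ hv₂ hv₃
  obtain ⟨m, p₁, p₂, p₃, hp₁, hp₂, hp₃, hd₁₂, hd₂₃, hd₁₃⟩ :=
    Reachable.exists_edge_disjoint_paths (ConnectedComponent.exact (hv₁.trans hv₂.symm))
      (ConnectedComponent.exact (hv₃.trans hv₁.symm))
  let f := (Embedding.induce (G := G) Lᶜ).toHom
  have hf : Function.Injective f := (Embedding.induce (G := G) Lᶜ).injective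
  have hout {a : ↥Lᶜ} (p : (G.induce Lᶜ).Walk m a) {u : V} (hu : u ∈ L) :
      u ∉ (p.map f).support :=
    p.notMem_support_map_induce (not_not_intro hu)
  have hdisj {a b : ↥Lᶜ} {ua ub : V} {p : (G.induce Lᶜ).Walk m a}
      {q : (G.induce Lᶜ).Walk m b} (hpq : p.edges.Disjoint q.edges) (ha : G.Adj a ua)
      (hb : G.Adj b ub) (hua : ua ∈ L) (hub : ub ∈ L) (hab : ua ≠ ub) :
      ∀ e ∈ ((p.map f).concat ha).edges, e ∉ ((q.map f).concat hb).edges := by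
    have hmap : (p.map f).edges.Disjoint (q.map f).edges := by
      rw [Walk.edges_map, Walk.edges_map]
      exact hpq.map (Sym2.map.injective hf)
    exact fun e he₁ he₂ =>
      Walk.disjoint_edges_concat hmap ha hb hab (hout q hua) (hout p hub) he₁ he₂
  exact ⟨m, m.2, u₁, u₂, u₃, hu₁, hu₂, hu₃, hu₁₂, hu₂₃, hu₁₃,
    (p₁.map f).concat h₁.symm, (p₂.map f).concat h₂.symm, (p₃.map f).concat h₃.symm,
    ((hp₁.map hf).concat (hout p₁ hu₁) _), ((hp₂.map hf).concat (hout p₂ hu₂) _),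
    ((hp₃.map hf).concat (hout p₃ hu₃) _),
    hdisj hd₁₂ _ _ hu₁ hu₂ hu₁₂, hdisj hd₂₃ _ _ hu₂ hu₃ hu₂₃, hdisj hd₁₃ _ _ hu₁ hu₃ hu₁₃⟩

theorem stmt4_general {V : Type} (G : SimpleGraph V)
    (L : Set V) (h0 : ZeroForked G L) :
    ∀ c : (G.induce (Lᶜ : Set V)).ConnectedComponent,
      {u ∈ L | ∃ v ∈ Subtype.val '' c.supp, G.Adj u v}.ncard ≤ 2 := by
  intro c
  rcases Set.finite_or_infinite {u ∈ L | ∃ v ∈ Subtype.val '' c.supp, G.Adj u v}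
    with hfin | hinf
  · by_contra! hlt
    obtain ⟨u₁, ⟨hu₁, _, ⟨v₁, hv₁, rfl⟩, h₁⟩, u₂, ⟨hu₂, _, ⟨v₂, hv₂, rfl⟩, h₂⟩,
      u₃, ⟨hu₃, _, ⟨v₃, hv₃, rfl⟩, h₃⟩, hu₁₂, hu₁₃, hu₂₃⟩ := (Set.two_lt_ncard hfin).1 hlt
    obtain ⟨i, hi⟩ := exists_isFork_of_adj_connectedComponent c hu₁ hu₂ hu₃ hu₁₂ hu₁₃ hu₂₃
      hv₁ hv₂ hv₃ h₁ h₂ h₃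
    exact h0 i hi
  · rw [hinf.ncard]
    norm_num

theorem stmt4 {V : Type} [Fintype V] (G : SimpleGraph V) (hT : G.IsTree)
    (L : Set V) (h0 : ZeroForked G L) :
    ∀ c : (G.induce (Lᶜ : Set V)).ConnectedComponent,
      {u ∈ L | ∃ v ∈ Subtype.val '' c.supp, G.Adj u v}.ncard ≤ 2 :=
  stmt4_general G L h0
end

section
/- Let T = (V, E) be a finite tree and L ⊆ V. Define, for nonempty V' ⊆ V \ L, the ratio ρ(V') = |V'| / Γ(V'), where Γ(V') is the number of edges between V' and V \ V'. Then there exists a maximizer of ρ over nonempty subsets of V \ L that is entirely contained in the vertex set of a single connected component of T \ L. -/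
open SimpleGraph

/-- `Γ(A, V \ A)`: the number of edges of `G` with exactly one endpoint in `A`. -/
noncomputable def cutCount {V : Type} [Fintype V] (G : SimpleGraph V) (A : Set V) : ℕ :=
  {e ∈ G.edgeSet | ∃ a b : V, e = s(a, b) ∧ a ∈ A ∧ b ∉ A}.ncard

/-!
Split a maximizer `W` of `ρ` into its part `A` inside one component of `G.induce Lᶜ` and the
rest `B`. No edge of `G` joins `A` to `B`, so both `|·|` and `Γ` are additive on `W = A ∪ B`,
and `ρ W` is the mediant of `ρ A` and `ρ B`. Since `ρ B ≤ ρ W`, the mediant inequality forces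
`ρ W ≤ ρ A`, so `A` is a maximizer as well. Connectedness of the tree keeps every `Γ` positive.
-/

lemma add_div_add_le_div_of_div_le_add_div_add {a b c d : ℝ} (hb : 0 < b) (hd : 0 < d)
    (h : c / d ≤ (a + c) / (b + d)) : (a + c) / (b + d) ≤ a / b := by
  rw [div_le_div_iff₀ hd (by positivity)] at h
  rw [div_le_div_iff₀ (by positivity) hb]
  nlinarith

namespace SimpleGraph

variable {V : Type} {G : SimpleGraph V} {A B : Set V}

def cutEdges (G : SimpleGraph V) (A : Set V) : Set (Sym2 V) :=
  {e ∈ G.edgeSet | ∃ a b : V, e = s(a, b) ∧ a ∈ A ∧ b ∉ A}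

noncomputable def cutRatio [Fintype V] (G : SimpleGraph V) (A : Set V) : ℝ :=
  A.ncard / cutCount G A

lemma cutCount_eq_ncard_cutEdges [Fintype V] (G : SimpleGraph V) (A : Set V) :
    cutCount G A = (G.cutEdges A).ncard := rfl

lemma mem_cutEdges {e : Sym2 V} :
    e ∈ G.cutEdges A ↔ ∃ a b : V, G.Adj a b ∧ e = s(a, b) ∧ a ∈ A ∧ b ∉ A := by
  constructor
  · rintro ⟨he, a, b, rfl, ha, hb⟩
    exact ⟨a, b, he, rfl, ha, hb⟩
  · rintro ⟨a, b, hab, rfl, ha, hb⟩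
    exact ⟨hab, a, b, rfl, ha, hb⟩

lemma Preconnected.cutEdges_nonempty (hG : G.Preconnected) (hA : A.Nonempty)
    (hA' : Aᶜ.Nonempty) : (G.cutEdges A).Nonempty := by
  obtain ⟨a, ha⟩ := hA
  obtain ⟨b, hb⟩ := hA'
  obtain ⟨p⟩ := hG a b
  obtain ⟨d, -, hd₁, hd₂⟩ := p.exists_boundary_dart A ha hb
  exact ⟨s(d.fst, d.snd), mem_cutEdges.mpr ⟨d.fst, d.snd, d.adj, rfl, hd₁, hd₂⟩⟩

lemma Preconnected.cutCount_pos [Fintype V] (hG : G.Preconnected) (hA : A.Nonempty)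
    (hA' : Aᶜ.Nonempty) : 0 < cutCount G A :=
  (Set.ncard_pos (Set.toFinite _)).mpr (hG.cutEdges_nonempty hA hA')

lemma cutEdges_union (hAB : ∀ a ∈ A, ∀ b ∈ B, ¬ G.Adj a b) :
    G.cutEdges (A ∪ B) = G.cutEdges A ∪ G.cutEdges B := by
  ext e
  simp only [Set.mem_union, mem_cutEdges, not_or]
  constructor
  · rintro ⟨a, b, hab, rfl, ha | ha, hbA, hbB⟩
    · exact .inl ⟨a, b, hab, rfl, ha, hbA⟩
    · exact .inr ⟨a, b, hab, rfl, ha, hbB⟩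
  · rintro (⟨a, b, hab, rfl, ha, hbA⟩ | ⟨a, b, hab, rfl, ha, hbB⟩)
    · exact ⟨a, b, hab, rfl, .inl ha, hbA, fun hbB ↦ hAB a ha b hbB hab⟩
    · exact ⟨a, b, hab, rfl, .inr ha, fun hbA ↦ hAB b hbA a ha hab.symm, hbB⟩

lemma disjoint_cutEdges (hAB : Disjoint A B) (hnadj : ∀ a ∈ A, ∀ b ∈ B, ¬ G.Adj a b) :
    Disjoint (G.cutEdges A) (G.cutEdges B) := by
  rw [Set.disjoint_left]
  intro e heA heB
  obtain ⟨a, b, hab, rfl, ha, -⟩ := mem_cutEdges.mp heA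
  obtain ⟨x, y, -, hxy, hx, -⟩ := mem_cutEdges.mp heB
  rcases Sym2.eq_iff.mp hxy with ⟨rfl, -⟩ | ⟨-, hbx⟩
  · exact Set.disjoint_left.mp hAB ha hx
  · exact hnadj a ha b (hbx ▸ hx) hab

lemma cutCount_union [Fintype V] (hAB : Disjoint A B)
    (hnadj : ∀ a ∈ A, ∀ b ∈ B, ¬ G.Adj a b) :
    cutCount G (A ∪ B) = cutCount G A + cutCount G B := by
  simp only [cutCount_eq_ncard_cutEdges, cutEdges_union hnadj]
  exact Set.ncard_union_eq (disjoint_cutEdges hAB hnadj)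

lemma Preconnected.cutRatio_union_le_left [Fintype V] (hG : G.Preconnected)
    (hAB : Disjoint A B) (hnadj : ∀ a ∈ A, ∀ b ∈ B, ¬ G.Adj a b) (hA : A.Nonempty)
    (hB : B.Nonempty) (hBle : G.cutRatio B ≤ G.cutRatio (A ∪ B)) :
    G.cutRatio (A ∪ B) ≤ G.cutRatio A := by
  have hΓA : (0 : ℝ) < cutCount G A := mod_cast hG.cutCount_pos hA <|
    hB.mono fun _ hb ha ↦ Set.disjoint_left.mp hAB ha hb
  have hΓB : (0 : ℝ) < cutCount G B := mod_cast hG.cutCount_pos hB <|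
    hA.mono fun _ ha hb ↦ Set.disjoint_left.mp hAB ha hb
  unfold cutRatio at hBle ⊢
  rw [Set.ncard_union_eq hAB, cutCount_union hAB hnadj] at hBle ⊢
  push_cast at hBle ⊢
  exact add_div_add_le_div_of_div_le_add_div_add hΓA hΓB hBle

lemma mem_image_supp_induce_of_adj {s : Set V} {c : (G.induce s).ConnectedComponent}
    {x y : V} (hx : x ∈ Subtype.val '' c.supp) (hy : y ∈ s) (hxy : G.Adj x y) :
    y ∈ Subtype.val '' c.supp := by
  obtain ⟨⟨x, _⟩, hxc, rfl⟩ := hx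
  exact ⟨⟨y, hy⟩, c.mem_supp_of_adj_mem_supp hxc hxy, rfl⟩

end SimpleGraph

theorem stmt5 {V : Type} [Fintype V] (G : SimpleGraph V) (hT : G.IsTree)
    (L : Set V) (hne : (Lᶜ : Set V).Nonempty) :
    ∃ W : Set V, W.Nonempty ∧ W ⊆ Lᶜ ∧
      (∃ c : (G.induce (Lᶜ : Set V)).ConnectedComponent, W ⊆ Subtype.val '' c.supp) ∧
      ∀ W' : Set V, W'.Nonempty → W' ⊆ Lᶜ →
        (W'.ncard : ℝ) / (cutCount G W' : ℝ) ≤ (W.ncard : ℝ) / (cutCount G W : ℝ) := by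
  obtain ⟨v, hv⟩ := hne
  obtain ⟨W, ⟨⟨w, hw⟩, hWL⟩, hmax⟩ := Set.exists_max_image {A : Set V | A.Nonempty ∧ A ⊆ Lᶜ}
    G.cutRatio (Set.toFinite _) ⟨{v}, Set.singleton_nonempty v, Set.singleton_subset_iff.mpr hv⟩
  let c := (G.induce Lᶜ).connectedComponentMk ⟨w, hWL hw⟩
  let C : Set V := Subtype.val '' c.supp
  have hwA : w ∈ W ∩ C := ⟨hw, ⟨w, hWL hw⟩, rfl, rfl⟩
  have hWA : G.cutRatio W ≤ G.cutRatio (W ∩ C) := by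
    rcases (W \ C).eq_empty_or_nonempty with hB | hB
    · rw [Set.inter_eq_left.mpr (Set.sdiff_eq_empty.mp hB)]
    · have hnadj : ∀ a ∈ W ∩ C, ∀ b ∈ W \ C, ¬ G.Adj a b := fun a ha b hb hab ↦
        hb.2 (mem_image_supp_induce_of_adj ha.2 (hWL hb.1) hab)
      have hsplit := hT.connected.preconnected.cutRatio_union_le_left Set.disjoint_sdiff_inter.symm
        hnadj ⟨w, hwA⟩ hB
      rw [Set.inter_union_sdiff] at hsplit
      exact hsplit (hmax _ ⟨hB, Set.sdiff_subset.trans hWL⟩)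
  exact ⟨W ∩ C, ⟨w, hwA⟩, Set.inter_subset_left.trans hWL, ⟨c, Set.inter_subset_right⟩,
    fun W' hW' hW'L ↦ (hmax W' ⟨hW', hW'L⟩).trans hWA⟩
end

section
/- Let T = (V, E) be a finite tree and L ⊆ V with V \ L nonempty. Then Ψ*(L) ≤ Υ(L, 1), where Υ(L, 1) is the number of vertices of the largest connected component of T \ L. -/
open SimpleGraph

/-- `Ψ*(L)`: the maximum of `|W| / Γ(W, V \ W)` over nonempty `W ⊆ V \ L`. -/
noncomputable def psiStar {V : Type} [Fintype V] (G : SimpleGraph V) (L : Set V) : ℝ :=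
  sSup {r : ℝ | ∃ W : Set V, W.Nonempty ∧ W ⊆ Lᶜ ∧ r = (W.ncard : ℝ) / (cutCount G W : ℝ)}

/-- `Υ(L, 1)`: the number of vertices of a largest connected component of `T \ L`. -/
noncomputable def largestCompSize {V : Type} [Fintype V] (G : SimpleGraph V) (A : Set V) : ℕ :=
  sSup (Set.range fun c : (G.induce A).ConnectedComponent => Nat.card c.supp)

/-!
Split `W ⊆ V \ L` into the connected components of `T[W]`. Each lies inside a component of
`T \ L`, so has at most `Υ(L, 1)` vertices. If `W ≠ V`, connectivity of `T` gives each of them an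
edge leaving `W`, and its endpoint in `W` tells the component apart, so there are at most
`Γ(W, V \ W)` components. Hence `|W| ≤ Γ(W, V \ W) · Υ(L, 1)`.
-/

namespace SimpleGraph

variable {V V' : Type*} {G : SimpleGraph V} {G' : SimpleGraph V'}

lemma ConnectedComponent.card_supp_le_card_supp_map [Finite V'] (φ : G ↪g G')
    (C : G.ConnectedComponent) : Nat.card C.supp ≤ Nat.card (C.map φ.toHom).supp :=
  Nat.card_le_card_of_injective (fun v ↦ ⟨φ v.1, congrArg (map φ.toHom) v.2⟩)
    fun _ _ h ↦ Subtype.ext (φ.injective (congrArg Subtype.val h))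

lemma card_eq_sum_card_connectedComponent_supp [Finite V] [Fintype G.ConnectedComponent] :
    Nat.card V = ∑ C : G.ConnectedComponent, Nat.card C.supp := by
  rw [← Nat.card_congr (Equiv.sigmaFiberEquiv G.connectedComponentMk), Nat.card_sigma]
  exact Finset.sum_congr rfl fun C _ ↦
    Nat.card_congr (Equiv.subtypeEquivRight fun v ↦ (C.mem_supp_iff v).symm)

lemma ConnectedComponent.exists_adj_notMem_of_induce (hG : G.Preconnected) {W : Set V}
    {u : V} (hu : u ∉ W) (C : (G.induce W).ConnectedComponent) :
    ∃ a ∈ C.supp, ∃ b ∉ W, G.Adj a b := by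
  obtain ⟨x, rfl⟩ := C.exists_rep
  obtain ⟨d, -, ⟨a, ha, had⟩, hd⟩ := (hG x u).some.exists_boundary_dart
    (Subtype.val '' ((G.induce W).connectedComponentMk x).supp) ⟨x, rfl, rfl⟩
    fun ⟨v, _, hv⟩ ↦ hu (hv ▸ v.2)
  refine ⟨a, ha, d.snd, fun hb ↦ hd ⟨⟨d.snd, hb⟩, ?_, rfl⟩, had ▸ d.adj⟩
  rw [mem_supp_iff, ← ha]
  exact ConnectedComponent.connectedComponentMk_eq_of_adj (G := G.induce W)
    (show G.Adj d.snd a by rw [had]; exact d.adj.symm)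

end SimpleGraph

section cutCount

variable {V : Type} [Fintype V] (G : SimpleGraph V)

lemma card_connectedComponent_induce_le_cutCount (hG : G.Preconnected) {W : Set V} {u : V}
    (hu : u ∉ W) : Nat.card (G.induce W).ConnectedComponent ≤ cutCount G W := by
  choose a haC b hb hab using
    fun C : (G.induce W).ConnectedComponent ↦ C.exists_adj_notMem_of_induce hG hu
  refine (Nat.card_le_card_of_injective
    (β := {e ∈ G.edgeSet | ∃ a b : V, e = s(a, b) ∧ a ∈ W ∧ b ∉ W})
    (fun C ↦ ⟨s(a C, b C), hab C, a C, b C, rfl, (a C).2, hb C⟩) fun C C' h ↦ ?_).trans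
    (Nat.card_coe_set_eq _).le
  have ha : a C = a C' := by
    rcases Sym2.eq_iff.1 (congrArg Subtype.val h) with ⟨h, -⟩ | ⟨-, h⟩
    · exact Subtype.ext h
    · exact absurd (h ▸ (a C').2) (hb C)
  rw [← (C.mem_supp_iff _).1 (haC C), ← (C'.mem_supp_iff _).1 (haC C'), ha]

lemma card_supp_le_largestCompSize {W A : Set V} (hWA : W ⊆ A)
    (C : (G.induce W).ConnectedComponent) : Nat.card C.supp ≤ largestCompSize G A :=
  (C.card_supp_le_card_supp_map (G.induceHomOfLE hWA)).trans
    (le_csSup (Set.finite_range _).bddAbove ⟨_, rfl⟩)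

lemma ncard_le_cutCount_mul_largestCompSize (hG : G.Preconnected) {W A : Set V} (hWA : W ⊆ A)
    {u : V} (hu : u ∉ W) : W.ncard ≤ cutCount G W * largestCompSize G A := by
  have := Fintype.ofFinite (G.induce W).ConnectedComponent
  calc W.ncard = ∑ C : (G.induce W).ConnectedComponent, Nat.card C.supp := by
        rw [← Nat.card_coe_set_eq, card_eq_sum_card_connectedComponent_supp (G := G.induce W)]
    _ ≤ ∑ _C : (G.induce W).ConnectedComponent, largestCompSize G A :=
        Finset.sum_le_sum fun C _ ↦ card_supp_le_largestCompSize G hWA C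
    _ = Nat.card (G.induce W).ConnectedComponent * largestCompSize G A := by
        rw [Finset.sum_const, Finset.card_univ, smul_eq_mul, Nat.card_eq_fintype_card]
    _ ≤ cutCount G W * largestCompSize G A :=
        Nat.mul_le_mul_right _ (card_connectedComponent_induce_le_cutCount G hG hu)

end cutCount

theorem stmt6_general {V : Type} [Fintype V] (G : SimpleGraph V) (hT : G.IsTree)
    (L : Set V) :
    psiStar G L ≤ (largestCompSize G (Lᶜ : Set V) : ℝ) := by
  refine Real.sSup_le ?_ (Nat.cast_nonneg _)
  rintro r ⟨W, -, hWL, rfl⟩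
  by_cases hW : W = Set.univ
  · simp [hW, cutCount] -- no edge leaves `V`, and `x / 0 = 0`
  obtain ⟨u, hu⟩ := Set.nonempty_compl.2 hW
  refine div_le_of_le_mul₀ (Nat.cast_nonneg _) (Nat.cast_nonneg _) ?_
  exact_mod_cast (ncard_le_cutCount_mul_largestCompSize G hT.connected.preconnected hWL hu).trans
    (Nat.mul_comm _ _).le

theorem stmt6 {V : Type} [Fintype V] (G : SimpleGraph V) (hT : G.IsTree)
    (L : Set V) (hne : (Lᶜ : Set V).Nonempty) :
    psiStar G L ≤ (largestCompSize G (Lᶜ : Set V) : ℝ) :=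
  stmt6_general G hT L
end

section
/- Let T = (V, E) be a finite tree, L ⊆ V, and L⁺ = L ∪ fork(L). Then Ψ*(L⁺) ≤ Ψ*(L). -/
open SimpleGraph

lemma ncard_div_cutCount_le_card {V : Type} [Fintype V] (G : SimpleGraph V) (W : Set V) :
    (W.ncard : ℝ) / (cutCount G W : ℝ) ≤ Fintype.card V := by
  have hW : (W.ncard : ℝ) ≤ Fintype.card V := by
    exact_mod_cast Nat.card_eq_fintype_card (α := V) ▸ Set.ncard_le_card W
  rcases Nat.eq_zero_or_pos (cutCount G W) with h0 | hpos
  · simp only [h0, Nat.cast_zero, div_zero]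
    positivity
  · exact (div_le_self (by positivity) (by exact_mod_cast hpos)).trans hW

lemma bddAbove_psiStar_ratios {V : Type} [Fintype V] (G : SimpleGraph V) (L : Set V) :
    BddAbove {r : ℝ | ∃ W : Set V, W.Nonempty ∧ W ⊆ Lᶜ ∧
      r = (W.ncard : ℝ) / (cutCount G W : ℝ)} := by
  refine ⟨Fintype.card V, ?_⟩
  rintro r ⟨W, -, -, rfl⟩
  exact ncard_div_cutCount_le_card G W

/-- Enlarging the excluded set only removes candidates `W` from the supremum. -/
lemma psiStar_anti {V : Type} [Fintype V] (G : SimpleGraph V) {L M : Set V} (hLM : L ⊆ M)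
    (hM : (Mᶜ : Set V).Nonempty) : psiStar G M ≤ psiStar G L := by
  refine csSup_le_csSup (bddAbove_psiStar_ratios G L) ⟨_, Mᶜ, hM, subset_rfl, rfl⟩ ?_
  rintro r ⟨W, hWne, hWM, rfl⟩
  exact ⟨W, hWne, hWM.trans (Set.compl_subset_compl.mpr hLM), rfl⟩

theorem stmt8_general {V : Type} [Fintype V] (G : SimpleGraph V) (L : Set V)
    (hne : ((L ∪ {i | IsFork G L i})ᶜ : Set V).Nonempty) :
    psiStar G (L ∪ {i | IsFork G L i}) ≤ psiStar G L :=
  psiStar_anti G Set.subset_union_left hne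

theorem stmt8 {V : Type} [Fintype V] (G : SimpleGraph V) (hT : G.IsTree) (L : Set V)
    (hne : ((L ∪ {i | IsFork G L i})ᶜ : Set V).Nonempty) :
    psiStar G (L ∪ {i | IsFork G L i}) ≤ psiStar G L :=
  stmt8_general G L hne
end

section
/- Let T = (V, E) be a finite tree, L⁺ ⊆ V a 0-forked query set, and y a ±1 labeling of V. Consider the predictor that assigns to every vertex of each connected component C of T \ L⁺ the label of the connection node of C nearest to it (the unique connection node if C has one, the closer of the two otherwise). Then the number of vertices of V \ L⁺ on which this predictor disagrees with y is at most Υ(L⁺, Φ_T(y)), the sum of the sizes of the Φ_T(y) largest components of T \ L⁺ (or |V \ L⁺| if there are fewer components). -/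
open SimpleGraph

/-- The φ-edges of `G` under the labeling `y`. -/
def phiEdges {V : Type} (G : SimpleGraph V) (y : V → ℤ) : Set (Sym2 V) :=
  {e ∈ G.edgeSet | ∃ a b : V, e = s(a, b) ∧ y a ≠ y b}

/-- `Υ(L, K)`: the sum of the sizes of the `K` largest connected components of
`T \ L` (equivalently, the maximum over families of at most `K` components of the
total number of their vertices); it equals `|V \ L|` if there are fewer than `K`
components. -/
noncomputable def upsilon {V : Type} [Fintype V] (G : SimpleGraph V) (L : Set V) (K : ℕ) : ℕ :=
  sSup {m | ∃ s : Finset ((G.induce (Lᶜ : Set V)).ConnectedComponent),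
    s.card ≤ K ∧ m = ∑ c ∈ s, Nat.card c.supp}

/-- The connection nodes of a component `c` of `T \ L`. -/
def connNodes {V : Type} (G : SimpleGraph V) (L : Set V)
    (c : (G.induce (Lᶜ : Set V)).ConnectedComponent) : Set V :=
  {u ∈ L | ∃ v ∈ Subtype.val '' c.supp, G.Adj u v}

/-! A vertex of a component `C` of `T \ L` can only be mispredicted if its label differs from
that of some connection node of `C`; the path from that node into `C` then crosses a φ-edge
with an endpoint in `C`. No edge has endpoints in two different components, so at most
`Φ_T(y)` components contain mistakes, and the mistakes number at most the total size of
those components. -/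

namespace SimpleGraph

variable {V : Type*} {G : SimpleGraph V}

lemma ConnectedComponent.exists_adj_ne_of_mem_supp {α : Type*} {c : G.ConnectedComponent}
    {y : V → α} {w v : V} (hw : w ∈ c.supp) (hv : v ∈ c.supp) (hne : y w ≠ y v) :
    ∃ a ∈ c.supp, ∃ b, G.Adj a b ∧ y a ≠ y b := by
  classical
  rw [ConnectedComponent.mem_supp_iff] at hw hv
  obtain ⟨p⟩ := ConnectedComponent.exact (hw.trans hv.symm)
  obtain ⟨d, hd, hfst, hsnd⟩ := p.exists_boundary_dart {x | y x = y w} rfl hne.symm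
  have hdw : G.Reachable w d.fst :=
    (p.takeUntil _ (p.dart_fst_mem_support_of_mem_darts hd)).reachable
  refine ⟨d.fst, ?_, d.snd, d.adj, fun h => hsnd (h.symm.trans hfst)⟩
  rw [ConnectedComponent.mem_supp_iff, ← hw]
  exact ConnectedComponent.sound hdw.symm

lemma induce_connectedComponent_eq_of_mem_edge {s : Set V} {e : Sym2 V} (he : e ∈ G.edgeSet)
    {c c' : (G.induce s).ConnectedComponent} {x x' : s} (hx : x ∈ c.supp) (hx' : x' ∈ c'.supp)
    (hxe : (x : V) ∈ e) (hxe' : (x' : V) ∈ e) : c = c' := by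
  classical
  rw [ConnectedComponent.mem_supp_iff] at hx hx'
  rw [← hx, ← hx']
  by_cases hxx' : (x : V) = x'
  · rw [Subtype.val_injective hxx']
  · rw [(Sym2.mem_and_mem_iff hxx').mp ⟨hxe, hxe'⟩, mem_edgeSet] at he
    exact ConnectedComponent.connectedComponentMk_eq_of_adj (by simpa using he)

lemma card_le_ncard_of_forall_exists_incident {s : Set V} {F : Set (Sym2 V)}
    (hF : F ⊆ G.edgeSet) (hFfin : F.Finite) (S : Finset (G.induce s).ConnectedComponent)
    (hS : ∀ c ∈ S, ∃ e ∈ F, ∃ x ∈ c.supp, (x : V) ∈ e) : S.card ≤ F.ncard := by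
  choose e he x hx hxe using hS
  rw [Set.ncard_eq_toFinset_card _ hFfin, ← S.card_attach]
  refine Finset.card_le_card_of_injOn (fun c => e c c.2)
    (fun c _ => hFfin.mem_toFinset.mpr (he c c.2)) ?_
  rintro ⟨c, hc⟩ - ⟨c', hc'⟩ - (hee : e c hc = e c' hc')
  exact Subtype.ext <| induce_connectedComponent_eq_of_mem_edge (hF (he c hc)) (hx c hc)
    (hx c' hc') (hxe c hc) (hee ▸ hxe c' hc')

lemma ncard_le_sum_card_supp_of_subset [Finite V] {s : Set V} {M : Set V}
    {S : Finset (G.induce s).ConnectedComponent} (hM : M ⊆ ⋃ c ∈ S, Subtype.val '' c.supp) :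
    M.ncard ≤ ∑ c ∈ S, Nat.card c.supp :=
  calc M.ncard ≤ (⋃ c ∈ S, Subtype.val '' c.supp).ncard := Set.ncard_le_ncard hM
    _ ≤ ∑ c ∈ S, (Subtype.val '' c.supp).ncard := S.set_ncard_biUnion_le _
    _ = ∑ c ∈ S, Nat.card c.supp := by
      simp only [Set.ncard_image_of_injective _ Subtype.val_injective, Nat.card_coe_set_eq]

end SimpleGraph

open SimpleGraph

lemma sum_card_supp_le_upsilon {V : Type} [Fintype V] {G : SimpleGraph V} {L : Set V} {K : ℕ}
    {S : Finset (G.induce Lᶜ).ConnectedComponent} (hS : S.card ≤ K) :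
    ∑ c ∈ S, Nat.card c.supp ≤ upsilon G L K := by
  classical
  have : Fintype (G.induce Lᶜ).ConnectedComponent := Fintype.ofFinite _
  refine le_csSup ⟨∑ c : (G.induce Lᶜ).ConnectedComponent, Nat.card c.supp, ?_⟩ ⟨S, hS, rfl⟩
  rintro m ⟨s, -, rfl⟩
  exact Finset.sum_le_sum_of_subset s.subset_univ

lemma exists_phiEdge_incident_of_mem_connNodes {V : Type} {G : SimpleGraph V} {L : Set V}
    {y : V → ℤ} {c : (G.induce Lᶜ).ConnectedComponent} {u : V} (hu : u ∈ connNodes G L c)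
    {v : (Lᶜ : Set V)} (hv : v ∈ c.supp) (hne : y u ≠ y v) :
    ∃ e ∈ phiEdges G y, ∃ x ∈ c.supp, (x : V) ∈ e := by
  obtain ⟨-, _, ⟨w, hw, rfl⟩, huw⟩ := hu
  by_cases huw' : y u = y w
  · obtain ⟨a, ha, b, hab, hne'⟩ :=
      ConnectedComponent.exists_adj_ne_of_mem_supp (y := y ∘ Subtype.val) hw hv
        fun h => hne (huw'.trans h)
    exact ⟨s(a, b), ⟨hab, a, b, rfl, hne'⟩, a, ha, Sym2.mem_mk_left _ _⟩
  · exact ⟨s(u, w), ⟨huw, u, w, rfl, huw'⟩, w, hw, Sym2.mem_mk_right _ _⟩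

theorem stmt12_general {V : Type} [Fintype V] (G : SimpleGraph V)
    (L : Set V) (y : V → ℤ)
    (f : V → ℤ)
    (hf : ∀ v, v ∉ L → ∀ c : (G.induce (Lᶜ : Set V)).ConnectedComponent,
      v ∈ Subtype.val '' c.supp →
        ∃ u ∈ connNodes G L c, f v = y u ∧ ∀ u' ∈ connNodes G L c, G.dist v u ≤ G.dist v u') :
    {v : V | v ∉ L ∧ f v ≠ y v}.ncard ≤ upsilon G L (phiEdges G y).ncard := by
  classical
  have : Fintype (G.induce Lᶜ).ConnectedComponent := Fintype.ofFinite _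
  let S := Finset.univ.filter fun c : (G.induce Lᶜ).ConnectedComponent =>
    ∃ x ∈ c.supp, f x ≠ y x
  have hcover : {v | v ∉ L ∧ f v ≠ y v} ⊆ ⋃ c ∈ S, Subtype.val '' c.supp := by
    rintro v ⟨hvL, hfv⟩
    exact Set.mem_biUnion (Finset.mem_filter.mpr ⟨Finset.mem_univ _, ⟨v, hvL⟩, rfl, hfv⟩)
      ⟨⟨v, hvL⟩, rfl, rfl⟩
  have hphi : ∀ c ∈ S, ∃ e ∈ phiEdges G y, ∃ x ∈ c.supp, (x : V) ∈ e := by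
    intro c hc
    obtain ⟨x, hxc, hfx⟩ := (Finset.mem_filter.mp hc).2
    obtain ⟨u, hu, hfu, -⟩ := hf x x.2 c ⟨x, hxc, rfl⟩
    exact exists_phiEdge_incident_of_mem_connNodes hu hxc (hfu ▸ hfx)
  calc {v | v ∉ L ∧ f v ≠ y v}.ncard ≤ ∑ c ∈ S, Nat.card c.supp :=
        ncard_le_sum_card_supp_of_subset hcover
    _ ≤ upsilon G L (phiEdges G y).ncard := sum_card_supp_le_upsilon <|
        card_le_ncard_of_forall_exists_incident (fun _ he => he.1) (Set.toFinite _) S hphi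

theorem stmt12 {V : Type} [Fintype V] (G : SimpleGraph V) (hT : G.IsTree)
    (L : Set V) (h0 : ZeroForked G L) (y : V → ℤ) (hy : ∀ v, y v = 1 ∨ y v = -1)
    (f : V → ℤ)
    (hf : ∀ v, v ∉ L → ∀ c : (G.induce (Lᶜ : Set V)).ConnectedComponent,
      v ∈ Subtype.val '' c.supp →
        ∃ u ∈ connNodes G L c, f v = y u ∧ ∀ u' ∈ connNodes G L c, G.dist v u ≤ G.dist v u') :
    {v : V | v ∉ L ∧ f v ≠ y v}.ncard ≤ upsilon G L (phiEdges G y).ncard :=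
  stmt12_general G L y f hf
end

section
/- Let T = (V, E) be a finite tree, L⁺ ⊆ V a 0-forked subset, and K ≥ 0 an integer. Then there exists a probability distribution over labelings y : V → {−1, +1} with cutsize Φ_T(y) ≤ K such that, for any function f assigning labels to V \ L⁺ depending only on the restriction of y to L⁺, the expected number of vertices i ∈ V \ L⁺ with f(y|_{L⁺})(i) ≠ y_i is at least Υ(L⁺, K)/2. -/
open SimpleGraph

/-!
A component `c` of `T \ L` is joined to `L` by at most two edges: three such edges would end at
three distinct vertices of `L` (`T` is acyclic), and the path through `c` between two of them and a
walk through `c` from the third would first meet at a fork node inside `c`.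
Hence the labeling that is `-1` exactly on `c` is the product of two labelings with at most one
cut edge each: one side of a boundary edge (a bridge), and its symmetric difference with `c`.
Choosing one of the two factors uniformly and independently for each of the `K` largest components
gives labelings of cutsize at most `K`. Toggling the choice made for `c` negates the labels on `c`
and keeps those on `L`, so a predictor that sees only `L` errs at each vertex of these components
with probability at least `1/2`.
-/

open scoped symmDiff

section Averaging

open Finset

lemma involutive_update_not {ι : Type} [DecidableEq ι] (i : ι) :
    Function.Involutive fun ω : ι → Bool => Function.update ω i (!ω i) := by
  intro ω
  simp

variable {Ω β : Type} [Fintype Ω]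

lemma card_le_two_mul_card_filter_ne [DecidableEq β] {σ : Ω → Ω} (hσ : Function.Involutive σ)
    {guess lab : Ω → β} (hguess : ∀ ω, guess (σ ω) = guess ω) (hlab : ∀ ω, lab (σ ω) ≠ lab ω) :
    Fintype.card Ω ≤ 2 * #{ω | guess ω ≠ lab ω} := by
  -- `σ` sends every correct guess to a wrong one
  have hright : #{ω | ¬guess ω ≠ lab ω} ≤ #{ω | guess ω ≠ lab ω} := by
    refine card_le_card_of_injOn σ (fun ω hω => ?_) hσ.injective.injOn
    simp only [coe_filter, mem_univ, true_and, not_not, Set.mem_ofPred_eq] at hω ⊢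
    rw [hguess, hω]
    exact (hlab ω).symm
  rw [← card_univ, ← card_filter_add_card_filter_not (fun ω => guess ω ≠ lab ω)]
  omega

lemma card_mul_card_le_two_mul_sum_card_filter_ne [DecidableEq β] {V : Type} (U : Finset V)
    {guess lab : Ω → V → β}
    (h : ∀ v ∈ U, ∃ σ : Ω → Ω, Function.Involutive σ ∧ (∀ ω, guess (σ ω) v = guess ω v) ∧
      ∀ ω, lab (σ ω) v ≠ lab ω v) :
    #U * Fintype.card Ω ≤ 2 * ∑ ω, #{v ∈ U | guess ω v ≠ lab ω v} := by
  calc #U * Fintype.card Ω = ∑ _v ∈ U, Fintype.card Ω := by rw [sum_const, smul_eq_mul]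
    _ ≤ ∑ v ∈ U, 2 * #{ω | guess ω v ≠ lab ω v} := sum_le_sum fun v hv => by
        obtain ⟨σ, hσ, hguess, hlab⟩ := h v hv
        exact card_le_two_mul_card_filter_ne hσ hguess hlab
    _ = 2 * ∑ ω, #{v ∈ U | guess ω v ≠ lab ω v} := by
        simp only [← mul_sum, card_filter]
        rw [sum_comm]

lemma card_mul_card_le_two_mul_sum_ncard_mistakes {V : Type} [Finite V] {L : Set V}
    (Y : Ω → V → ℤ) (U : Finset V) (hU : ∀ v ∈ U, v ∉ L)
    (hflip : ∀ v ∈ U, ∃ σ : Ω → Ω, Function.Involutive σ ∧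
      (∀ ω, ∀ u ∈ L, Y (σ ω) u = Y ω u) ∧ ∀ ω, Y (σ ω) v ≠ Y ω v)
    (f : (L → ℤ) → V → ℤ) :
    #U * Fintype.card Ω ≤ 2 * ∑ ω, {v : V | v ∉ L ∧ f (fun u => Y ω u.1) v ≠ Y ω v}.ncard := by
  classical
  have hcount := card_mul_card_le_two_mul_sum_card_filter_ne U
    (guess := fun ω v => f (fun u => Y ω u.1) v) (lab := Y) fun v hv => by
      obtain ⟨σ, hσ, hL, hv⟩ := hflip v hv
      exact ⟨σ, hσ, fun ω => by simp only [hL ω _ (Subtype.prop _)], hv⟩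
  refine hcount.trans (Nat.mul_le_mul_left 2 (sum_le_sum fun ω _ => ?_))
  rw [← Set.ncard_coe_finset]
  refine Set.ncard_le_ncard fun v hv => ?_
  simp only [coe_filter, Set.mem_ofPred_eq] at hv
  exact ⟨hU v hv.1, hv.2⟩

lemma exists_uniform_weights (Ω : Type) [Fintype Ω] [Nonempty Ω] :
    ∃ (m : ℕ) (p : Fin m → ℝ) (e : Fin m → Ω), (∀ i, 0 ≤ p i) ∧ ∑ i, p i = 1 ∧
      ∀ g : Ω → ℝ, ∑ i, p i * g (e i) = (∑ ω, g ω) / Fintype.card Ω := by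
  refine ⟨Fintype.card Ω, fun _ => (Fintype.card Ω : ℝ)⁻¹, (Fintype.equivFin Ω).symm,
    fun _ => by positivity, by simp, fun g => ?_⟩
  rw [← mul_sum, Equiv.sum_comp (Fintype.equivFin Ω).symm g, inv_mul_eq_div]

end Averaging

namespace SimpleGraph

variable {V : Type} (G : SimpleGraph V)

open Classical in
noncomputable def signLabel (S : Set V) (v : V) : ℤ := if v ∈ S then -1 else 1

def edgeBoundary (S : Set V) : Set (Sym2 V) :=
  {e ∈ G.edgeSet | ∃ a b, e = s(a, b) ∧ a ∈ S ∧ b ∉ S}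

variable {G}

lemma mk_mem_phiEdges_iff {y : V → ℤ} {a b : V} :
    s(a, b) ∈ phiEdges G y ↔ G.Adj a b ∧ y a ≠ y b := by
  simp only [phiEdges, Set.mem_ofPred_eq, mem_edgeSet, and_congr_right_iff]
  intro _
  constructor
  · rintro ⟨a', b', he, hne⟩
    rcases Sym2.eq_iff.mp he with ⟨rfl, rfl⟩ | ⟨rfl, rfl⟩
    exacts [hne, hne.symm]
  · exact fun h => ⟨a, b, rfl, h⟩

lemma mk_mem_edgeBoundary_iff {S : Set V} {a b : V} :
    s(a, b) ∈ G.edgeBoundary S ↔ G.Adj a b ∧ (a ∈ S ↔ b ∉ S) := by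
  simp only [edgeBoundary, Set.mem_ofPred_eq, mem_edgeSet, and_congr_right_iff]
  intro _
  constructor
  · rintro ⟨a', b', he, ha, hb⟩
    rcases Sym2.eq_iff.mp he with ⟨rfl, rfl⟩ | ⟨rfl, rfl⟩ <;> tauto
  · intro h
    by_cases ha : a ∈ S
    · exact ⟨a, b, rfl, ha, h.mp ha⟩
    · exact ⟨b, a, Sym2.eq_swap, by tauto, ha⟩

lemma signLabel_eq_one_or_eq_neg_one (S : Set V) (v : V) :
    signLabel S v = 1 ∨ signLabel S v = -1 := by
  unfold signLabel; split_ifs <;> simp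

lemma signLabel_mul_self (S : Set V) (v : V) : signLabel S v * signLabel S v = 1 := by
  rcases signLabel_eq_one_or_eq_neg_one S v with h | h <;> simp [h]

lemma signLabel_symmDiff (S T : Set V) (v : V) :
    signLabel (S ∆ T) v = signLabel S v * signLabel T v := by
  unfold signLabel
  by_cases hS : v ∈ S <;> by_cases hT : v ∈ T <;> simp [Set.mem_symmDiff, hS, hT]

lemma edgeBoundary_symmDiff_subset (S T : Set V) :
    G.edgeBoundary (S ∆ T) ⊆ G.edgeBoundary S ∆ G.edgeBoundary T := by
  rintro ⟨a, b⟩ h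
  simp only [Set.mem_symmDiff, mk_mem_edgeBoundary_iff] at h ⊢
  tauto

lemma phiEdges_prod_signLabel_subset {ι : Type} [Fintype ι] (S : ι → Set V) :
    phiEdges G (fun v => ∏ i, signLabel (S i) v) ⊆ ⋃ i, G.edgeBoundary (S i) := by
  rintro ⟨a, b⟩ h
  rw [mk_mem_phiEdges_iff] at h
  by_contra hnot
  refine h.2 (Finset.prod_congr rfl fun i _ => ?_)
  have hi : ¬(a ∈ S i ↔ b ∉ S i) := fun hab =>
    hnot (Set.mem_iUnion.mpr ⟨i, mk_mem_edgeBoundary_iff.mpr ⟨h.1, hab⟩⟩)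
  unfold signLabel
  by_cases ha : a ∈ S i <;> simp_all

@[simp]
lemma edgeBoundary_empty : G.edgeBoundary ∅ = ∅ := by
  ext ⟨a, b⟩
  simp [mk_mem_edgeBoundary_iff]

lemma edgeBoundary_setOf_reachable_deleteEdges (hG : G.IsAcyclic) {a b : V} (hab : G.Adj a b) :
    G.edgeBoundary {v | (G.deleteEdges {s(a, b)}).Reachable a v} = {s(a, b)} := by
  ext ⟨x, y⟩
  rw [mk_mem_edgeBoundary_iff, Set.mem_singleton_iff]
  constructor
  · rintro ⟨hxy, hside⟩
    by_contra hne
    have hdel : (G.deleteEdges {s(a, b)}).Adj x y := by simp [hxy, hne]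
    have : (G.deleteEdges {s(a, b)}).Reachable a x ↔ (G.deleteEdges {s(a, b)}).Reachable a y :=
      ⟨(·.trans hdel.reachable), (·.trans hdel.symm.reachable)⟩
    simp only [Set.mem_ofPred_eq] at hside
    tauto
  · intro he
    have hbridge := isAcyclic_iff_forall_adj_isBridge.mp hG hab
    rw [isBridge_iff] at hbridge
    rcases Sym2.eq_iff.mp he with ⟨rfl, rfl⟩ | ⟨rfl, rfl⟩
    · exact ⟨hab, by simp [hbridge]⟩
    · exact ⟨hab.symm, by simp [hbridge]⟩

lemma exists_edgeBoundary_split [Finite V] (hG : G.IsAcyclic) {S : Set V}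
    (hS : (G.edgeBoundary S).ncard ≤ 2) :
    ∃ P : Set V, (G.edgeBoundary P).ncard ≤ 1 ∧ (G.edgeBoundary (P ∆ S)).ncard ≤ 1 := by
  by_cases hS1 : (G.edgeBoundary S).ncard ≤ 1
  · exact ⟨⊥, by simp, by rwa [bot_symmDiff]⟩
  obtain ⟨e, he⟩ : (G.edgeBoundary S).Nonempty := Set.nonempty_of_ncard_ne_zero (by omega)
  induction e with | h a b =>
  have hab : G.Adj a b := (mk_mem_edgeBoundary_iff.mp he).1
  refine ⟨_, by rw [edgeBoundary_setOf_reachable_deleteEdges hG hab, Set.ncard_singleton], ?_⟩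
  have hsub : G.edgeBoundary ({v | (G.deleteEdges {s(a, b)}).Reachable a v} ∆ S) ⊆
      G.edgeBoundary S \ {s(a, b)} := by
    refine (edgeBoundary_symmDiff_subset _ _).trans ?_
    rw [edgeBoundary_setOf_reachable_deleteEdges hG hab]
    intro e
    simp only [Set.mem_symmDiff, Set.mem_singleton_iff, Set.mem_sdiff]
    rintro (⟨rfl, hnot⟩ | h)
    · exact absurd he hnot
    · exact h
  calc _ ≤ (G.edgeBoundary S \ {s(a, b)}).ncard := Set.ncard_le_ncard hsub
    _ ≤ 1 := by rw [Set.ncard_sdiff_singleton_of_mem he]; omega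

lemma Walk.exists_prefix_first_mem (S : Set V) :
    ∀ {z w : V} (q : G.Walk z w), w ∈ S →
      ∃ m ∈ S, ∃ r : G.Walk z m, r.support ⊆ q.support ∧ ∀ v ∈ r.support, v ∈ S → v = m
  | z, _, .nil, hw => ⟨z, hw, .nil, by simp, by simp⟩
  | z, _, .cons hadj q, hw => by
    by_cases hz : z ∈ S
    · exact ⟨z, hz, .nil, by simp, by simp⟩
    obtain ⟨m, hm, r, hrq, hr⟩ := exists_prefix_first_mem S q hw
    refine ⟨m, hm, .cons hadj r, ?_, ?_⟩
    · simpa using List.cons_subset_cons z hrq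
    · simp only [Walk.support_cons, List.mem_cons, forall_eq_or_imp]
      exact ⟨fun h => absurd h hz, hr⟩

lemma Walk.notMem_edges_of_supports_meet_at {m z x y : V} {r : G.Walk m z} {p : G.Walk x y}
    (h : ∀ v ∈ r.support, v ∈ p.support → v = m) : ∀ e ∈ r.edges, e ∉ p.edges := by
  rintro ⟨a, b⟩ hr hp
  have ha := h a (r.fst_mem_support_of_mem_edges hr) (p.fst_mem_support_of_mem_edges hp)
  have hb := h b (r.snd_mem_support_of_mem_edges hr) (p.snd_mem_support_of_mem_edges hp)
  exact (r.adj_of_mem_edges hr).ne (ha.trans hb.symm)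

lemma Walk.IsPath.exists_edgeDisjoint_paths_of_walk {x y z w : V} {p : G.Walk x y}
    (hp : p.IsPath) (q : G.Walk z w) (hw : w ∈ p.support) :
    ∃ m ∈ q.support, m ∈ p.support ∧
      ∃ (p₁ : G.Walk m x) (p₂ : G.Walk m y) (p₃ : G.Walk m z),
        p₁.IsPath ∧ p₂.IsPath ∧ p₃.IsPath ∧
        (∀ e ∈ p₁.edges, e ∉ p₂.edges) ∧ (∀ e ∈ p₂.edges, e ∉ p₃.edges) ∧
        (∀ e ∈ p₁.edges, e ∉ p₃.edges) := by
  classical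
  obtain ⟨m, hm, r, hrq, hr⟩ := q.exists_prefix_first_mem {v | v ∈ p.support} hw
  have hm : m ∈ p.support := hm
  have hmeet : ∀ v ∈ r.bypass.reverse.support, v ∈ p.support → v = m := by
    intro v hv
    rw [Walk.support_reverse, List.mem_reverse] at hv
    exact hr v (r.support_bypass_subset_support hv)
  have hp₃ := Walk.notMem_edges_of_supports_meet_at hmeet
  have hsplit : (p.takeUntil m hm).edges.Disjoint (p.dropUntil m hm).edges := by
    have hnd := hp.isTrail.edges_nodup
    rw [← p.take_spec hm, Walk.edges_append] at hnd
    exact List.disjoint_of_nodup_append hnd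
  refine ⟨m, hrq r.end_mem_support, hm, (p.takeUntil m hm).reverse, p.dropUntil m hm,
    r.bypass.reverse, (hp.takeUntil hm).reverse, hp.dropUntil hm, r.bypass_isPath.reverse,
    ?_, ?_, ?_⟩
  · intro e h₁ h₂
    rw [Walk.edges_reverse, List.mem_reverse] at h₁
    exact hsplit h₁ h₂
  · exact fun e h₂ h₃ => hp₃ e h₃ (p.edges_dropUntil_subset_edges hm h₂)
  · intro e h₁ h₃
    rw [Walk.edges_reverse, List.mem_reverse] at h₁
    exact hp₃ e h₃ (p.edges_takeUntil_subset_edges hm h₁)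

variable {L : Set V}

def componentSet (c : (G.induce Lᶜ).ConnectedComponent) : Set V := Subtype.val '' c.supp

variable {c : (G.induce Lᶜ).ConnectedComponent}

lemma notMem_of_mem_componentSet {v : V} (hv : v ∈ componentSet c) : v ∉ L := by
  obtain ⟨w, -, rfl⟩ := hv
  exact w.2

lemma ncard_componentSet : (componentSet c).ncard = Nat.card c.supp := by
  rw [componentSet, Set.ncard_image_of_injective _ Subtype.val_injective, Nat.card_coe_set_eq]

lemma disjoint_componentSet {c' : (G.induce Lᶜ).ConnectedComponent} (h : c ≠ c') :
    Disjoint (componentSet c) (componentSet c') := by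
  rw [Set.disjoint_left]
  rintro _ ⟨w, hw, rfl⟩ ⟨w', hw', hww'⟩
  cases Subtype.ext hww'
  rw [ConnectedComponent.mem_supp_iff] at hw hw'
  exact h (hw.symm.trans hw')

lemma mem_componentSet_of_adj {a b : V} (ha : a ∈ componentSet c) (hab : G.Adj a b)
    (hb : b ∉ L) : b ∈ componentSet c := by
  obtain ⟨a, ha, rfl⟩ := ha
  refine ⟨⟨b, hb⟩, ?_, rfl⟩
  rw [ConnectedComponent.mem_supp_iff] at ha ⊢
  rw [← ha, ConnectedComponent.eq]
  exact Adj.reachable (G := G.induce Lᶜ) hab.symm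

lemma exists_isPath_of_mem_componentSet {a b : V} (ha : a ∈ componentSet c)
    (hb : b ∈ componentSet c) :
    ∃ p : G.Walk a b, p.IsPath ∧ ∀ v ∈ p.support, v ∈ componentSet c := by
  classical
  obtain ⟨a, ha, rfl⟩ := ha
  obtain ⟨b, hb, rfl⟩ := hb
  rw [ConnectedComponent.mem_supp_iff] at ha hb
  obtain ⟨p, hp⟩ := (ConnectedComponent.eq.mp (ha.trans hb.symm)).exists_isPath
  have hsupp : ∀ v ∈ (p.map (Embedding.induce (G := G) Lᶜ).toHom).support,
      v ∈ componentSet c := by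
    intro v hv
    rw [Walk.support_map, List.mem_map] at hv
    obtain ⟨z, hz, rfl⟩ := hv
    refine ⟨z, ?_, rfl⟩
    rw [ConnectedComponent.mem_supp_iff, ← ha]
    exact (ConnectedComponent.eq.mpr ⟨p.takeUntil z hz⟩).symm
  exact ⟨_, hp.map (Embedding.induce (G := G) Lᶜ).injective, hsupp⟩

open Classical in
lemma card_biUnion_componentSet [Fintype V] (s : Finset (G.induce Lᶜ).ConnectedComponent) :
    (s.biUnion fun c => (componentSet c).toFinset).card = ∑ c ∈ s, Nat.card c.supp := by
  rw [Finset.card_biUnion fun c _ c' _ h => Set.disjoint_toFinset.mpr (disjoint_componentSet h)]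
  refine Finset.sum_congr rfl fun c _ => ?_
  rw [← Set.ncard_eq_toFinset_card', ncard_componentSet]

lemma exists_of_mem_edgeBoundary_componentSet {e : Sym2 V}
    (he : e ∈ G.edgeBoundary (componentSet c)) :
    ∃ a u, e = s(a, u) ∧ G.Adj a u ∧ a ∈ componentSet c ∧ u ∈ L := by
  obtain ⟨hE, a, u, rfl, ha, hu⟩ := he
  have hadj : G.Adj a u := G.mem_edgeSet.mp hE
  refine ⟨a, u, rfl, hadj, ha, ?_⟩
  by_contra huL
  exact hu (mem_componentSet_of_adj ha hadj huL)

lemma eq_of_adj_of_mem_componentSet (hG : G.IsAcyclic) {a₁ a₂ u : V}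
    (ha₁ : a₁ ∈ componentSet c) (ha₂ : a₂ ∈ componentSet c) (hu : u ∈ L)
    (had₁ : G.Adj a₁ u) (had₂ : G.Adj a₂ u) : a₁ = a₂ := by
  obtain ⟨p, hp, hpc⟩ := exists_isPath_of_mem_componentSet ha₁ ha₂
  have hlong : (Walk.cons had₁.symm p).IsPath :=
    (Walk.cons_isPath_iff _ _).mpr ⟨hp, fun h => notMem_of_mem_componentSet (hpc u h) hu⟩
  have hshort : (Walk.cons had₂.symm .nil : G.Walk u a₂).IsPath := by simp [had₂.ne']
  have hlen := congrArg (fun q : G.Path u a₂ => q.1.length)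
    ((hG.subsingleton_path u a₂).elim ⟨_, hlong⟩ ⟨_, hshort⟩)
  simp only [Walk.length_cons, Walk.length_nil, add_eq_right] at hlen
  exact Walk.eq_of_length_eq_zero hlen

lemma exists_isFork_of_three_hinges {a₁ a₂ a₃ u₁ u₂ u₃ : V} (ha₁ : a₁ ∈ componentSet c)
    (ha₂ : a₂ ∈ componentSet c) (ha₃ : a₃ ∈ componentSet c) (hu₁ : u₁ ∈ L) (hu₂ : u₂ ∈ L)
    (hu₃ : u₃ ∈ L) (had₁ : G.Adj a₁ u₁) (had₂ : G.Adj a₂ u₂) (had₃ : G.Adj a₃ u₃)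
    (h₁₂ : u₁ ≠ u₂) (h₂₃ : u₂ ≠ u₃) (h₁₃ : u₁ ≠ u₃) : ∃ m, IsFork G L m := by
  -- the fork is where a walk `u₃ - a₃ ⋯ a₁` inside `c` first meets the path `u₁ - a₁ ⋯ a₂ - u₂`
  obtain ⟨p, hp, hpc⟩ := exists_isPath_of_mem_componentSet ha₁ ha₂
  obtain ⟨q, -, hqc⟩ := exists_isPath_of_mem_componentSet ha₃ ha₁
  have hL : ∀ {v}, v ∈ L → v ∉ p.support := fun hv h => notMem_of_mem_componentSet (hpc _ h) hv
  have hP : (Walk.cons had₁.symm (p.concat had₂)).IsPath := by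
    refine (Walk.cons_isPath_iff _ _).mpr ⟨hp.concat (hL hu₂) had₂, ?_⟩
    simp [Walk.support_concat, hL hu₁, h₁₂]
  obtain ⟨m, hmq, hmP, legs⟩ :=
    hP.exists_edgeDisjoint_paths_of_walk (Walk.cons had₃.symm q) (by simp)
  have hm : m ∈ componentSet c := by
    rw [Walk.support_cons, List.mem_cons] at hmq
    rcases hmq with rfl | hmq
    · simp [Walk.support_concat, hL hu₃, h₁₃.symm, h₂₃.symm] at hmP
    · exact hqc m hmq
  exact ⟨m, notMem_of_mem_componentSet hm, u₁, u₂, u₃, hu₁, hu₂, hu₃, h₁₂, h₂₃, h₁₃, legs⟩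

lemma ncard_edgeBoundary_componentSet_le_two [Finite V] (hG : G.IsAcyclic)
    (h0 : ZeroForked G L) : (G.edgeBoundary (componentSet c)).ncard ≤ 2 := by
  by_contra! h
  obtain ⟨e₁, e₂, e₃, he₁, he₂, he₃, h₁₂, h₁₃, h₂₃⟩ := (Set.two_lt_ncard_iff).mp h
  obtain ⟨a₁, u₁, rfl, had₁, ha₁, hu₁⟩ := exists_of_mem_edgeBoundary_componentSet he₁
  obtain ⟨a₂, u₂, rfl, had₂, ha₂, hu₂⟩ := exists_of_mem_edgeBoundary_componentSet he₂
  obtain ⟨a₃, u₃, rfl, had₃, ha₃, hu₃⟩ := exists_of_mem_edgeBoundary_componentSet he₃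
  have hne : ∀ {a a' u u' : V}, a ∈ componentSet c → a' ∈ componentSet c → u' ∈ L →
      G.Adj a u → G.Adj a' u' → s(a, u) ≠ s(a', u') → u ≠ u' := by
    rintro a a' u u' ha ha' hu' had had' hne rfl
    exact hne (by rw [eq_of_adj_of_mem_componentSet hG ha ha' hu' had had'])
  obtain ⟨m, hm⟩ := exists_isFork_of_three_hinges ha₁ ha₂ ha₃ hu₁ hu₂ hu₃ had₁ had₂ had₃
    (hne ha₁ ha₂ hu₂ had₁ had₂ h₁₂) (hne ha₂ ha₃ hu₃ had₂ had₃ h₂₃)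
    (hne ha₁ ha₃ hu₃ had₁ had₃ h₁₃)
  exact h0 m hm

variable {ι : Type} [Fintype ι]

noncomputable def choiceLabel (P S : ι → Set V) (ω : ι → Bool) (v : V) : ℤ :=
  ∏ i, signLabel (bif ω i then P i ∆ S i else P i) v

lemma choiceLabel_eq_one_or_eq_neg_one (P S : ι → Set V) (ω : ι → Bool) (v : V) :
    choiceLabel P S ω v = 1 ∨ choiceLabel P S ω v = -1 :=
  Finset.prod_induction _ (fun z : ℤ => z = 1 ∨ z = -1)
    (by rintro _ _ (rfl | rfl) (rfl | rfl) <;> simp) (Or.inl rfl)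
    (fun _ _ => signLabel_eq_one_or_eq_neg_one _ _)

lemma ncard_phiEdges_choiceLabel_le [Finite V] {P S : ι → Set V}
    (hP : ∀ i, (G.edgeBoundary (P i)).ncard ≤ 1 ∧ (G.edgeBoundary (P i ∆ S i)).ncard ≤ 1)
    (ω : ι → Bool) : (phiEdges G (choiceLabel P S ω)).ncard ≤ Fintype.card ι := by
  calc (phiEdges G (choiceLabel P S ω)).ncard
      ≤ (⋃ i, G.edgeBoundary (bif ω i then P i ∆ S i else P i)).ncard :=
        Set.ncard_le_ncard (phiEdges_prod_signLabel_subset _)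
    _ ≤ ∑ i, (G.edgeBoundary (bif ω i then P i ∆ S i else P i)).ncard :=
        Set.ncard_iUnion_le_of_fintype _
    _ ≤ ∑ _i : ι, 1 := Finset.sum_le_sum fun i _ => by cases ω i <;> simp [hP i]
    _ = Fintype.card ι := by simp

lemma choiceLabel_update_not [DecidableEq ι] (P S : ι → Set V) (ω : ι → Bool) (i : ι)
    (v : V) :
    choiceLabel P S (Function.update ω i (!ω i)) v = signLabel (S i) v * choiceLabel P S ω v := by
  have hfactor : ∀ j, signLabel (bif Function.update ω i (!ω i) j then P j ∆ S j else P j) v =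
      (if j = i then signLabel (S i) v else 1) * signLabel (bif ω j then P j ∆ S j else P j) v := by
    intro j
    rcases eq_or_ne j i with rfl | hj
    · cases ω j
      · simp [signLabel_symmDiff, mul_comm]
      · simp only [Function.update_self, Bool.not_true, cond_false, cond_true, if_true,
          signLabel_symmDiff]
        linear_combination (-signLabel (P j) v) * signLabel_mul_self (S j) v
    · simp [hj]
  simp only [choiceLabel, hfactor, Finset.prod_mul_distrib, Fintype.prod_ite_eq']

lemma exists_involutive_flip_choiceLabel [DecidableEq ι] (P S : ι → Set V)
    (hSL : ∀ i, ∀ v ∈ S i, v ∉ L) {i : ι} {v : V} (hv : v ∈ S i) :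
    ∃ σ : (ι → Bool) → ι → Bool, Function.Involutive σ ∧
      (∀ ω, ∀ u ∈ L, choiceLabel P S (σ ω) u = choiceLabel P S ω u) ∧
      ∀ ω, choiceLabel P S (σ ω) v ≠ choiceLabel P S ω v := by
  refine ⟨_, involutive_update_not i, fun ω u hu => ?_, fun ω => ?_⟩
  · rw [choiceLabel_update_not, signLabel, if_neg (hSL i u · hu), one_mul]
  · rw [choiceLabel_update_not, signLabel, if_pos hv]
    rcases choiceLabel_eq_one_or_eq_neg_one P S ω v with h | h <;> simp [h]

end SimpleGraph

lemma exists_finset_eq_upsilon {V : Type} [Fintype V] (G : SimpleGraph V) (L : Set V) (K : ℕ) :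
    ∃ s : Finset (G.induce Lᶜ).ConnectedComponent,
      s.card ≤ K ∧ upsilon G L K = ∑ c ∈ s, Nat.card c.supp := by
  classical
  set S := {m | ∃ s : Finset (G.induce Lᶜ).ConnectedComponent,
      s.card ≤ K ∧ m = ∑ c ∈ s, Nat.card c.supp}
  have hbdd : BddAbove S :=
    ((Set.finite_range fun s : Finset (G.induce Lᶜ).ConnectedComponent =>
      ∑ c ∈ s, Nat.card c.supp).subset (by rintro _ ⟨s, -, rfl⟩; exact ⟨s, rfl⟩)).bddAbove
  exact Nat.sSup_mem (⟨0, ∅, by simp, by simp⟩ : S.Nonempty) hbdd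

theorem stmt13 {V : Type} [Fintype V] (G : SimpleGraph V) (hT : G.IsTree)
    (L : Set V) (h0 : ZeroForked G L) (K : ℕ) :
    ∃ (m : ℕ) (p : Fin m → ℝ) (Y : Fin m → V → ℤ),
      (∀ ω, 0 ≤ p ω) ∧ (∑ ω, p ω) = 1 ∧
      (∀ ω v, Y ω v = 1 ∨ Y ω v = -1) ∧
      (∀ ω, (phiEdges G (Y ω)).ncard ≤ K) ∧
      ∀ f : (L → ℤ) → V → ℤ,
        (upsilon G L K : ℝ) / 2 ≤
          ∑ ω, p ω * ({v : V | v ∉ L ∧ f (fun u => Y ω u.1) v ≠ Y ω v}.ncard : ℝ) := by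
  classical
  obtain ⟨s, hsK, hΥ⟩ := exists_finset_eq_upsilon G L K
  choose P hP using fun c : s => exists_edgeBoundary_split hT.isAcyclic
    (ncard_edgeBoundary_componentSet_le_two (c := c.1) hT.isAcyclic h0)
  set Y := choiceLabel P fun c : s => componentSet c.1
  set U := s.biUnion fun c => (componentSet c).toFinset
  have hU : ∀ v ∈ U, ∃ c : s, v ∈ componentSet c.1 := fun v hv => by
    obtain ⟨c, hc, hvc⟩ := Finset.mem_biUnion.mp hv
    exact ⟨⟨c, hc⟩, Set.mem_toFinset.mp hvc⟩
  have hcount := card_mul_card_le_two_mul_sum_ncard_mistakes Y U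
    (fun v hv => (hU v hv).elim fun _ hvc => notMem_of_mem_componentSet hvc)
    (fun v hv => (hU v hv).elim fun _ hvc => exists_involutive_flip_choiceLabel _ _
      (fun _ _ => notMem_of_mem_componentSet) hvc)
  rw [card_biUnion_componentSet, ← hΥ] at hcount
  obtain ⟨m, p, e, hp0, hp1, hmean⟩ := exists_uniform_weights (s → Bool)
  refine ⟨m, p, fun i => Y (e i), hp0, hp1, fun i v => choiceLabel_eq_one_or_eq_neg_one _ _ _ _,
    fun i => (ncard_phiEdges_choiceLabel_le hP _).trans (by simpa using hsK), fun f => ?_⟩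
  rw [hmean fun ω => ({v : V | v ∉ L ∧ f (fun u => Y ω u.1) v ≠ Y ω v}.ncard : ℝ),
    div_le_div_iff₀ two_pos (Nat.cast_pos.mpr Fintype.card_pos), mul_comm _ (2 : ℝ)]
  exact_mod_cast hcount f
end

section
/- Let T = (V, E) be a finite tree and L ⊆ V. For any vertex i ∈ V \ L, adding i to L creates at most one new fork node: |fork(L ∪ {i}) \ (fork(L) ∪ {i})| ≤ 1. -/
/-!
In a tree, the branches at `v` are the fibres of the map sending `x` to the first vertex after `v`
on the path from `v` to `x`, and `v` is a fork of `L` iff `L` meets three branches at `v`. So a new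
fork `v` of `L ∪ {i}` is a vertex at which `L` meets exactly two branches and `i` lies in a third.
If `v ≠ w` were two of them, a point of `L` off the branch at `v` containing `w` lies in the branch
at `w` containing `v`; hence `i` does not, so `i` lies in the branch at `v` containing `w`. By
symmetry some point of `L` lies there as well, a contradiction.
-/

open SimpleGraph

theorem Set.two_lt_encard_iff {α : Type*} {s : Set α} :
    2 < s.encard ↔ ∃ a ∈ s, ∃ b ∈ s, ∃ c ∈ s, a ≠ b ∧ b ≠ c ∧ a ≠ c := by
  constructor
  · intro h
    obtain ⟨t, hts, ht⟩ := Set.exists_subset_encard_eq (Order.add_one_le_of_lt h)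
    obtain ⟨a, b, c, hab, hac, hbc, rfl⟩ := Set.encard_eq_three.1 ht
    exact ⟨a, hts (by simp), b, hts (by simp), c, hts (by simp), hab, hbc, hac⟩
  · rintro ⟨a, ha, b, hb, c, hc, hab, hbc, hac⟩
    calc (2 : ℕ∞) < 3 := by norm_num
      _ = ({a, b, c} : Set α).encard := (Set.encard_eq_three.2 ⟨a, b, c, hab, hac, hbc, rfl⟩).symm
      _ ≤ s.encard := Set.encard_le_encard (by simp [Set.insert_subset_iff, ha, hb, hc])

namespace SimpleGraph.IsTree

section Branches

variable {V : Type*} {G : SimpleGraph V} (hT : G.IsTree)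

noncomputable def path (u v : V) : G.Walk u v := (hT.existsUnique_path u v).exists.choose

lemma path_isPath (u v : V) : (hT.path u v).IsPath :=
  (hT.existsUnique_path u v).exists.choose_spec

lemma eq_path {u v : V} {p : G.Walk u v} (hp : p.IsPath) : p = hT.path u v :=
  (hT.existsUnique_path u v).unique hp (hT.path_isPath u v)

lemma edges_path_subset {u v : V} (p : G.Walk u v) : (hT.path u v).edges ⊆ p.edges := by
  classical
  rw [← hT.eq_path p.bypass_isPath]
  exact p.edges_bypass_subset_edges

/-- The junk value at `x = v` is `v` itself. -/
noncomputable def firstStep (v x : V) : V := (hT.path v x).snd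

lemma adj_firstStep {v x : V} (hx : x ≠ v) : G.Adj v (hT.firstStep v x) :=
  (hT.path v x).adj_snd (Walk.not_nil_of_ne hx.symm)

lemma mk_firstStep_mem_edges {v x : V} (hx : x ≠ v) :
    s(v, hT.firstStep v x) ∈ (hT.path v x).edges :=
  (hT.path v x).mk_start_snd_mem_edges (Walk.not_nil_of_ne hx.symm)

lemma firstStep_eq_of_mem_support {v x u : V} (hu : u ∈ (hT.path v x).support) (huv : u ≠ v) :
    hT.firstStep v u = hT.firstStep v x := by
  classical
  rw [firstStep, ← hT.eq_path ((hT.path_isPath v x).takeUntil hu)]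
  exact Walk.snd_takeUntil huv _ hu

lemma disjoint_edges_path_iff {v x y : V} (hx : x ≠ v) (hy : y ≠ v) :
    (∀ e ∈ (hT.path v x).edges, e ∉ (hT.path v y).edges) ↔
      hT.firstStep v x ≠ hT.firstStep v y := by
  constructor
  · intro h hxy
    exact h _ (hT.mk_firstStep_mem_edges hx) (hxy ▸ hT.mk_firstStep_mem_edges hy)
  · intro hne e hex hey
    induction e using Sym2.ind with | _ a b
    obtain ⟨u, hu, hux, huy⟩ :
        ∃ u ≠ v, u ∈ (hT.path v x).support ∧ u ∈ (hT.path v y).support := by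
      rcases eq_or_ne a v with rfl | hav
      · exact ⟨b, (Walk.adj_of_mem_edges _ hex).ne.symm,
          Walk.snd_mem_support_of_mem_edges _ hex, Walk.snd_mem_support_of_mem_edges _ hey⟩
      · exact ⟨a, hav, Walk.fst_mem_support_of_mem_edges _ hex,
          Walk.fst_mem_support_of_mem_edges _ hey⟩
    exact hne ((hT.firstStep_eq_of_mem_support hux hu).symm.trans
      (hT.firstStep_eq_of_mem_support huy hu))

/-- If `a` is not in the branch at `v` containing `w`, then `v` lies on the path from `w` to `a`:
otherwise the first edge from `v` towards `a` would have to lie on the path from `v` to `w`. -/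
lemma firstStep_eq_of_firstStep_ne {v w a : V} (hvw : v ≠ w)
    (h : hT.firstStep v w ≠ hT.firstStep v a) : hT.firstStep w a = hT.firstStep w v := by
  suffices hv : v ∈ (hT.path w a).support from (hT.firstStep_eq_of_mem_support hv hvw).symm
  by_contra hv
  have hav : a ≠ v := by
    rintro rfl
    exact hv (Walk.end_mem_support _)
  have he := hT.edges_path_subset ((hT.path v w).append (hT.path w a))
    (hT.mk_firstStep_mem_edges hav)
  rw [Walk.edges_append, List.mem_append] at he
  rcases he with he | he
  · exact h (hT.isAcyclic.eq_snd_of_adj_start (hT.path_isPath v w) (hT.adj_firstStep hav)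
      (Walk.snd_mem_support_of_mem_edges _ he)).symm
  · exact hv (Walk.fst_mem_support_of_mem_edges _ he)

theorem eq_of_nontrivial_of_notMem {L : Set V} {i v w : V}
    (hv : (hT.firstStep v '' L).Nontrivial) (hvi : hT.firstStep v i ∉ hT.firstStep v '' L)
    (hw : (hT.firstStep w '' L).Nontrivial) (hwi : hT.firstStep w i ∉ hT.firstStep w '' L) :
    v = w := by
  by_contra hvw
  obtain ⟨_, ⟨a, ha, rfl⟩, haw⟩ := hv.exists_ne (hT.firstStep v w)
  have hwa : hT.firstStep w a = hT.firstStep w v := hT.firstStep_eq_of_firstStep_ne hvw haw.symm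
  have hwv : hT.firstStep w v ≠ hT.firstStep w i := fun h => hwi ⟨a, ha, hwa.trans h⟩
  have hvi' : hT.firstStep v i = hT.firstStep v w :=
    hT.firstStep_eq_of_firstStep_ne (Ne.symm hvw) hwv
  obtain ⟨_, ⟨b, hb, rfl⟩, hbv⟩ := hw.exists_ne (hT.firstStep w v)
  have hvb : hT.firstStep v b = hT.firstStep v w :=
    hT.firstStep_eq_of_firstStep_ne (Ne.symm hvw) hbv.symm
  exact hvi ⟨b, hb, hvb.trans hvi'.symm⟩

end Branches

section Forks

variable {V : Type} {G : SimpleGraph V} (hT : G.IsTree)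

theorem isFork_iff {L : Set V} {v : V} :
    IsFork G L v ↔ v ∉ L ∧ 2 < (hT.firstStep v '' L).encard := by
  rw [Set.two_lt_encard_iff]
  constructor
  · rintro ⟨hvL, a, b, c, ha, hb, hc, -, -, -, p, q, r, hp, hq, hr, hpq, hqr, hpr⟩
    obtain rfl := hT.eq_path hp
    obtain rfl := hT.eq_path hq
    obtain rfl := hT.eq_path hr
    have hne : ∀ {x}, x ∈ L → x ≠ v := fun hx h => hvL (h ▸ hx)
    exact ⟨hvL, _, Set.mem_image_of_mem _ ha, _, Set.mem_image_of_mem _ hb, _,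
      Set.mem_image_of_mem _ hc, (hT.disjoint_edges_path_iff (hne ha) (hne hb)).1 hpq,
      (hT.disjoint_edges_path_iff (hne hb) (hne hc)).1 hqr,
      (hT.disjoint_edges_path_iff (hne ha) (hne hc)).1 hpr⟩
  · rintro ⟨hvL, _, ⟨a, ha, rfl⟩, _, ⟨b, hb, rfl⟩, _, ⟨c, hc, rfl⟩, hab, hbc, hac⟩
    have hne : ∀ {x}, x ∈ L → x ≠ v := fun hx h => hvL (h ▸ hx)
    exact ⟨hvL, a, b, c, ha, hb, hc, ne_of_apply_ne _ hab, ne_of_apply_ne _ hbc,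
      ne_of_apply_ne _ hac, hT.path v a, hT.path v b, hT.path v c, hT.path_isPath v a,
      hT.path_isPath v b, hT.path_isPath v c,
      (hT.disjoint_edges_path_iff (hne ha) (hne hb)).2 hab,
      (hT.disjoint_edges_path_iff (hne hb) (hne hc)).2 hbc,
      (hT.disjoint_edges_path_iff (hne ha) (hne hc)).2 hac⟩

theorem nontrivial_and_notMem_of_isFork_union {L : Set V} {i v : V}
    (h : IsFork G (L ∪ {i}) v) (h' : ¬ IsFork G L v) :
    (hT.firstStep v '' L).Nontrivial ∧ hT.firstStep v i ∉ hT.firstStep v '' L := by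
  rw [hT.isFork_iff, Set.union_singleton, Set.image_insert_eq] at h
  obtain ⟨hvLi, h⟩ := h
  have hvL : v ∉ L := fun hv => hvLi (Set.mem_insert_of_mem i hv)
  have hle : (hT.firstStep v '' L).encard ≤ 2 := by
    simpa [hT.isFork_iff, hvL] using h'
  constructor
  · rw [← Set.one_lt_encard_iff_nontrivial]
    by_contra! h1
    have hle₂ : (insert (hT.firstStep v i) (hT.firstStep v '' L)).encard ≤ 2 :=
      calc _ ≤ (hT.firstStep v '' L).encard + 1 := Set.encard_insert_le _ _
        _ ≤ 1 + 1 := by gcongr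
        _ = 2 := one_add_one_eq_two
    exact hle₂.not_gt h
  · intro hi
    rw [Set.insert_eq_of_mem hi] at h
    exact hle.not_gt h

end Forks

end SimpleGraph.IsTree

theorem stmt15_general {V : Type} (G : SimpleGraph V) (hT : G.IsTree)
    (L : Set V) (i : V) :
    ({v | IsFork G (L ∪ {i}) v} \ ({v | IsFork G L v} ∪ {i})).ncard ≤ 1 := by
  have hS : ({v | IsFork G (L ∪ {i}) v} \ ({v | IsFork G L v} ∪ {i})).Subsingleton := by
    intro v hv w hw
    simp only [Set.mem_sdiff, Set.mem_ofPred_eq, Set.mem_union, not_or] at hv hw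
    obtain ⟨hvL, hvi⟩ := hT.nontrivial_and_notMem_of_isFork_union hv.1 hv.2.1
    obtain ⟨hwL, hwi⟩ := hT.nontrivial_and_notMem_of_isFork_union hw.1 hw.2.1
    exact hT.eq_of_nontrivial_of_notMem hvL hvi hwL hwi
  exact (Set.ncard_le_one hS.finite).2 fun _ ha _ hb => hS ha hb

theorem stmt15 {V : Type} [Fintype V] (G : SimpleGraph V) (hT : G.IsTree)
    (L : Set V) (i : V) (hi : i ∉ L) :
    ({v | IsFork G (L ∪ {i}) v} \ ({v | IsFork G L v} ∪ {i})).ncard ≤ 1 :=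
  stmt15_general G hT L i
end
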